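/- arXiv:1601.04300 — 7 statements merged into one kernel-verified Lean document; each statement's English description precedes it below -/
import Mathlib

section
/- The derivative with respect to ξ of the expression K = (v'/v)² + 16c_q[(h² − C)v + (4c_z)²/sinh²(4c_zξ) · v⁻¹ − 2(4c_z coth(4c_zξ))h] vanishes identically whenever (v,h) satisfy the reduced system (log v)'' + 8c_q[(h² − C)v − (4c_z/sinh(4c_zξ))² v⁻¹] = 0 and v h' + (4c_z/sinh(4c_zξ))² = 0. -/
/-!
Write `w = v'/v`, `P = (4c_z)² / sinh²(4c_z ξ)` and `κ = 4c_z coth(4c_z ξ)`, so that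
`K = w² + 16c_q((h² - C)v + P/v - 2κh)`. The two hyperbolic identities `κ' = -P` and
`P' = -2κP`, together with `v' = wv`, `w' = -8c_q((h² - C)v - P/v)` and `vh' = -P`, make the
terms of `K'` cancel in pairs.
-/

open Complex

section FirstIntegral

variable {w v h P κ : ℝ → ℂ} {w' v' h' P' κ' : ℂ} {x : ℝ}

theorem hasDerivAt_firstIntegral_zero (cq C : ℂ) (hw : HasDerivAt w w' x)
    (hv : HasDerivAt v v' x) (hh : HasDerivAt h h' x) (hP : HasDerivAt P P' x)
    (hκ : HasDerivAt κ κ' x) (hv0 : v x ≠ 0) (hv' : v' = w x * v x)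
    (hw' : w' + 8 * cq * ((h x ^ 2 - C) * v x - P x / v x) = 0)
    (hh' : v x * h' + P x = 0) (hP' : P' = -2 * κ x * P x) (hκ' : κ' = -P x) :
    HasDerivAt (fun t => w t ^ 2 + 16 * cq * ((h t ^ 2 - C) * v t + P t / v t - 2 * κ t * h t))
      0 x := by
  have hK := (hw.pow 2).add
    (((((hh.pow 2).sub_const C).mul hv).add (hP.div hv hv0)).sub
      ((hκ.const_mul 2).mul hh) |>.const_mul (16 * cq))
  refine hK.congr_deriv ?_
  have hh'' : h' = -P x / v x := by field_simp; linear_combination hh'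
  have hw'' : w' = -8 * cq * ((h x ^ 2 - C) * v x - P x / v x) := by linear_combination hw'
  rw [Pi.pow_apply, hv', hh'', hw'', hP', hκ']
  field_simp
  ring

end FirstIntegral

section Hyperbolic

variable (a : ℂ) (x : ℝ)

theorem hasDerivAt_const_mul_ofReal : HasDerivAt (fun t : ℝ => a * t) a x := by
  simpa using (hasDerivAt_id x).ofReal_comp.const_mul a

theorem hasDerivAt_sinh_const_mul_ofReal :
    HasDerivAt (fun t : ℝ => sinh (a * t)) (a * cosh (a * x)) x := by
  simpa [mul_comm, Function.comp_def] using
    (hasDerivAt_sinh (a * x)).comp x (hasDerivAt_const_mul_ofReal a x)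

theorem hasDerivAt_cosh_const_mul_ofReal :
    HasDerivAt (fun t : ℝ => cosh (a * t)) (a * sinh (a * x)) x := by
  simpa [mul_comm, Function.comp_def] using
    (hasDerivAt_cosh (a * x)).comp x (hasDerivAt_const_mul_ofReal a x)

variable {a x}

theorem hasDerivAt_const_mul_coth (hx : sinh (a * x) ≠ 0) :
    HasDerivAt (fun t : ℝ => a * (cosh (a * t) / sinh (a * t)))
      (-(a ^ 2 / sinh (a * x) ^ 2)) x := by
  refine (((hasDerivAt_cosh_const_mul_ofReal a x).div
    (hasDerivAt_sinh_const_mul_ofReal a x) hx).const_mul a).congr_deriv ?_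
  field_simp
  linear_combination (-a ^ 2) * cosh_sq_sub_sinh_sq (a * x)

theorem hasDerivAt_sq_div_sinh_sq (hx : sinh (a * x) ≠ 0) :
    HasDerivAt (fun t : ℝ => a ^ 2 / sinh (a * t) ^ 2)
      (-2 * (a * (cosh (a * x) / sinh (a * x))) * (a ^ 2 / sinh (a * x) ^ 2)) x := by
  refine ((hasDerivAt_const x (a ^ 2)).div ((hasDerivAt_sinh_const_mul_ofReal a x).pow 2)
    (pow_ne_zero 2 hx)).congr_deriv ?_
  rw [Pi.pow_apply]
  field_simp
  ring

end Hyperbolic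

theorem stmt_0_general (cq cz C : ℂ) (v h : ℝ → ℂ) (s : Set ℝ)
    (hv0 : ∀ ξ ∈ s, v ξ ≠ 0)
    (hsinh : ∀ ξ ∈ s, Complex.sinh (4 * cz * (ξ : ℂ)) ≠ 0)
    (hvd : ∀ ξ ∈ s, DifferentiableAt ℝ v ξ)
    (hvd2 : ∀ ξ ∈ s, DifferentiableAt ℝ (deriv v) ξ)
    (hhd : ∀ ξ ∈ s, DifferentiableAt ℝ h ξ)
    (ode1 : ∀ ξ ∈ s, deriv (fun t => deriv v t / v t) ξ
        + 8 * cq * ((h ξ ^ 2 - C) * v ξ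
          - (4 * cz / Complex.sinh (4 * cz * (ξ : ℂ))) ^ 2 / v ξ) = 0)
    (ode2 : ∀ ξ ∈ s, v ξ * deriv h ξ
        + (4 * cz / Complex.sinh (4 * cz * (ξ : ℂ))) ^ 2 = 0) :
    ∀ ξ ∈ s, deriv (fun t => (deriv v t / v t) ^ 2
        + 16 * cq * ((h t ^ 2 - C) * v t
          + (4 * cz) ^ 2 / Complex.sinh (4 * cz * (t : ℂ)) ^ 2 / v t
          - 2 * (4 * cz * (Complex.cosh (4 * cz * (t : ℂ)) / Complex.sinh (4 * cz * (t : ℂ))))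
              * h t)) ξ = 0 := by
  intro ξ hξ
  have hw : HasDerivAt (fun t => deriv v t / v t) (deriv (fun t => deriv v t / v t) ξ) ξ :=
    ((hvd2 ξ hξ).div (hvd ξ hξ) (hv0 ξ hξ)).hasDerivAt
  refine (hasDerivAt_firstIntegral_zero cq C hw (hvd ξ hξ).hasDerivAt (hhd ξ hξ).hasDerivAt
    (hasDerivAt_sq_div_sinh_sq (hsinh ξ hξ)) (hasDerivAt_const_mul_coth (hsinh ξ hξ))
    (hv0 ξ hξ) (div_mul_cancel₀ _ (hv0 ξ hξ)).symm ?_ ?_ rfl rfl).deriv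
  · simpa only [div_pow] using ode1 ξ hξ
  · simpa only [div_pow] using ode2 ξ hξ

/-- The first integral `K` of the reduced system obtained from the Gauss-Codazzi
equations under the constraint that `1/Q` be harmonic: its derivative with respect
to `ξ` vanishes identically along solutions of the reduced system. -/
theorem stmt_0 (cq cz C : ℂ) (hcz : cz ≠ 0) (v h : ℝ → ℂ) (s : Set ℝ) (hs : IsOpen s)
    (hv0 : ∀ ξ ∈ s, v ξ ≠ 0)
    (hsinh : ∀ ξ ∈ s, Complex.sinh (4 * cz * (ξ : ℂ)) ≠ 0)
    (hvd : ∀ ξ ∈ s, DifferentiableAt ℝ v ξ)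
    (hvd2 : ∀ ξ ∈ s, DifferentiableAt ℝ (deriv v) ξ)
    (hhd : ∀ ξ ∈ s, DifferentiableAt ℝ h ξ)
    (ode1 : ∀ ξ ∈ s, deriv (fun t => deriv v t / v t) ξ
        + 8 * cq * ((h ξ ^ 2 - C) * v ξ
          - (4 * cz / Complex.sinh (4 * cz * (ξ : ℂ))) ^ 2 / v ξ) = 0)
    (ode2 : ∀ ξ ∈ s, v ξ * deriv h ξ
        + (4 * cz / Complex.sinh (4 * cz * (ξ : ℂ))) ^ 2 = 0) :
    ∀ ξ ∈ s, deriv (fun t => (deriv v t / v t) ^ 2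
        + 16 * cq * ((h t ^ 2 - C) * v t
          + (4 * cz) ^ 2 / Complex.sinh (4 * cz * (t : ℂ)) ^ 2 / v t
          - 2 * (4 * cz * (Complex.cosh (4 * cz * (t : ℂ)) / Complex.sinh (4 * cz * (t : ℂ))))
              * h t)) ξ = 0 :=
  stmt_0_general cq cz C v h s hv0 hsinh hvd hvd2 hhd ode1 ode2
end

section
/- The quantity K = (h''/h' + 8c_z coth(4c_zξ))² + 16c_q[(4c_z/sinh(4c_zξ))²(h² − C)/h' + h' + 8c_z coth(4c_zξ) h] is a first integral of the third-order ODE (log h')'' + 8c_q h' − (4c_z/sinh(4c_zξ))²(8c_q(h² − C)/h' + 2) = 0; that is, dK/dξ = 0 along every solution. -/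
/-!
Write `u = h''/h'`, `w = 8c_z coth(4c_z ξ)` and `q = (4c_z / sinh(4c_z ξ))²`. Because
`cosh² - sinh² = 1`, these satisfy `w' = -2q` and `q' = -q w`, and nothing else about the
hyperbolic functions is needed. With these relations and `h'' = u h'`, differentiating
`K = (u + w)² + 16c_q (q (h² - C)/h' + h' + w h)` gives `K' = 2(u + w) E`, where `E` is the
left-hand side of Bonnet's equation.
-/

open Complex

section Hyperbolic

variable (a : ℂ) {ξ : ℝ}

theorem hasDerivAt_sinh_mul_ofReal :
    HasDerivAt (fun t : ℝ => sinh (a * t)) (a * cosh (a * ξ)) ξ := by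
  simpa [mul_comm] using (((hasDerivAt_id (ξ : ℂ)).const_mul a).csinh).comp_ofReal

theorem hasDerivAt_cosh_mul_ofReal :
    HasDerivAt (fun t : ℝ => cosh (a * t)) (a * sinh (a * ξ)) ξ := by
  simpa [mul_comm] using (((hasDerivAt_id (ξ : ℂ)).const_mul a).ccosh).comp_ofReal

theorem hasDerivAt_coth_mul_ofReal (hξ : sinh (a * ξ) ≠ 0) :
    HasDerivAt (fun t : ℝ => cosh (a * t) / sinh (a * t)) (-a / sinh (a * ξ) ^ 2) ξ := by
  refine ((hasDerivAt_cosh_mul_ofReal a).div (hasDerivAt_sinh_mul_ofReal a) hξ).congr_deriv ?_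
  linear_combination (-a / sinh (a * ξ) ^ 2) * cosh_sq_sub_sinh_sq (a * ξ)

theorem hasDerivAt_div_sinh_mul_ofReal_sq (b : ℂ) (hξ : sinh (a * ξ) ≠ 0) :
    HasDerivAt (fun t : ℝ => (b / sinh (a * t)) ^ 2)
      (-((b / sinh (a * ξ)) ^ 2 * (2 * a * (cosh (a * ξ) / sinh (a * ξ))))) ξ := by
  refine (((hasDerivAt_const ξ b).div (hasDerivAt_sinh_mul_ofReal a) hξ).pow 2).congr_deriv ?_
  simp only [Pi.div_apply, Nat.cast_ofNat, Nat.add_one_sub_one, pow_one]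
  field_simp
  ring

end Hyperbolic

theorem hasDerivAt_hazzidakis {h p u w q : ℝ → ℂ} {ξ : ℝ} {u' : ℂ} (cq C : ℂ)
    (hh : HasDerivAt h (p ξ) ξ) (hp : HasDerivAt p (u ξ * p ξ) ξ) (hu : HasDerivAt u u' ξ)
    (hw : HasDerivAt w (-2 * q ξ) ξ) (hq : HasDerivAt q (-(q ξ * w ξ)) ξ) (hp0 : p ξ ≠ 0) :
    HasDerivAt
      (fun t => (u t + w t) ^ 2 + 16 * cq * (q t * (h t ^ 2 - C) / p t + p t + w t * h t))
      (2 * (u ξ + w ξ) * (u' + 8 * cq * p ξ - q ξ * (8 * cq * (h ξ ^ 2 - C) / p ξ + 2))) ξ := by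
  refine (((hu.add hw).pow 2).add
    ((((hq.mul ((hh.pow 2).sub_const C)).div hp hp0).add hp |>.add (hw.mul hh)).const_mul
      (16 * cq))).congr_deriv ?_
  simp only [Pi.add_apply, Pi.mul_apply, Pi.pow_apply]
  field_simp
  ring

theorem stmt_2_general (cq cz C : ℂ) (h : ℝ → ℂ) (s : Set ℝ)
    (hh' : ∀ ξ ∈ s, deriv h ξ ≠ 0)
    (hsinh : ∀ ξ ∈ s, Complex.sinh (4 * cz * (ξ : ℂ)) ≠ 0)
    (hhd : ∀ ξ ∈ s, DifferentiableAt ℝ h ξ)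
    (hhd2 : ∀ ξ ∈ s, DifferentiableAt ℝ (deriv h) ξ)
    (hhd3 : ∀ ξ ∈ s, DifferentiableAt ℝ (deriv (deriv h)) ξ)
    (ode : ∀ ξ ∈ s, deriv (fun t => deriv (deriv h) t / deriv h t) ξ
        + 8 * cq * deriv h ξ
        - (4 * cz / Complex.sinh (4 * cz * (ξ : ℂ))) ^ 2
          * (8 * cq * (h ξ ^ 2 - C) / deriv h ξ + 2) = 0) :
    ∀ ξ ∈ s, deriv (fun t =>
        (deriv (deriv h) t / deriv h t
            + 8 * cz * (Complex.cosh (4 * cz * (t : ℂ)) / Complex.sinh (4 * cz * (t : ℂ)))) ^ 2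
        + 16 * cq * ((4 * cz / Complex.sinh (4 * cz * (t : ℂ))) ^ 2 * (h t ^ 2 - C) / deriv h t
          + deriv h t
          + 8 * cz * (Complex.cosh (4 * cz * (t : ℂ)) / Complex.sinh (4 * cz * (t : ℂ)))
            * h t)) ξ = 0 := by
  intro ξ hξ
  have hu : HasDerivAt (fun t => deriv (deriv h) t / deriv h t)
      (deriv (fun t => deriv (deriv h) t / deriv h t) ξ) ξ :=
    ((hhd3 ξ hξ).fun_div (hhd2 ξ hξ) (hh' ξ hξ)).hasDerivAt
  have hp : HasDerivAt (deriv h) (deriv (deriv h) ξ / deriv h ξ * deriv h ξ) ξ := by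
    rw [div_mul_cancel₀ _ (hh' ξ hξ)]
    exact (hhd2 ξ hξ).hasDerivAt
  have hw := ((hasDerivAt_coth_mul_ofReal (4 * cz) (hsinh ξ hξ)).const_mul (8 * cz)).congr_deriv
    (show _ = -2 * (4 * cz / sinh (4 * cz * ξ)) ^ 2 by ring)
  have hq := (hasDerivAt_div_sinh_mul_ofReal_sq (4 * cz) (4 * cz) (hsinh ξ hξ)).congr_deriv
    (show _ = -((4 * cz / sinh (4 * cz * ξ)) ^ 2
      * (8 * cz * (cosh (4 * cz * ξ) / sinh (4 * cz * ξ)))) by ring)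
  have hK := hasDerivAt_hazzidakis (p := deriv h) (u := fun t => deriv (deriv h) t / deriv h t)
    (w := fun t : ℝ => 8 * cz * (cosh (4 * cz * t) / sinh (4 * cz * t)))
    (q := fun t : ℝ => (4 * cz / sinh (4 * cz * t)) ^ 2)
    cq C (hhd ξ hξ).hasDerivAt hp hu hw hq (hh' ξ hξ)
  rw [hK.deriv, ode ξ hξ, mul_zero]

/-- The Hazzidakis quantity
`K = (h''/h' + 8c_z coth(4c_z ξ))² + 16c_q[(4c_z/sinh(4c_z ξ))²(h²-C)/h' + h' + 8c_z coth(4c_z ξ) h]`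
is a first integral of Bonnet's third-order ODE
`(log h')'' + 8c_q h' - (4c_z/sinh(4c_z ξ))²(8c_q(h²-C)/h' + 2) = 0`:
its derivative vanishes along every solution. -/
theorem stmt_2 (cq cz C : ℂ) (h : ℝ → ℂ) (s : Set ℝ) (hs : IsOpen s)
    (hh' : ∀ ξ ∈ s, deriv h ξ ≠ 0)
    (hsinh : ∀ ξ ∈ s, Complex.sinh (4 * cz * (ξ : ℂ)) ≠ 0)
    (hhd : ∀ ξ ∈ s, DifferentiableAt ℝ h ξ)
    (hhd2 : ∀ ξ ∈ s, DifferentiableAt ℝ (deriv h) ξ)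
    (hhd3 : ∀ ξ ∈ s, DifferentiableAt ℝ (deriv (deriv h)) ξ)
    (ode : ∀ ξ ∈ s, deriv (fun t => deriv (deriv h) t / deriv h t) ξ
        + 8 * cq * deriv h ξ
        - (4 * cz / Complex.sinh (4 * cz * (ξ : ℂ))) ^ 2
          * (8 * cq * (h ξ ^ 2 - C) / deriv h ξ + 2) = 0) :
    ∀ ξ ∈ s, deriv (fun t =>
        (deriv (deriv h) t / deriv h t
            + 8 * cz * (Complex.cosh (4 * cz * (t : ℂ)) / Complex.sinh (4 * cz * (t : ℂ)))) ^ 2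
        + 16 * cq * ((4 * cz / Complex.sinh (4 * cz * (t : ℂ))) ^ 2 * (h t ^ 2 - C) / deriv h t
          + deriv h t
          + 8 * cz * (Complex.cosh (4 * cz * (t : ℂ)) / Complex.sinh (4 * cz * (t : ℂ)))
            * h t)) ξ = 0 :=
  stmt_2_general cq cz C h s hh' hsinh hhd hhd2 hhd3 ode
end

section
/- The involution (u, H, Q, Q̄) ↦ (−u, 2Q − c, (H+c)/2, (H−c)/2) maps solutions of the Gauss–Codazzi system u_{zz̄} + (1/2)(H² − c²)eᵘ − 2QQ̄e⁻ᵘ = 0, Q_z̄ − (1/2)H_z eᵘ = 0, Q̄_z − (1/2)H_z̄ eᵘ = 0 satisfying the constraint Q − Q̄ = c to solutions of the same system, and applying it twice is the identity. -/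
/-- `∂_z f`, treating `z` and `z̄` as independent complex variables. -/
noncomputable def dz (f : ℂ × ℂ → ℂ) (p : ℂ × ℂ) : ℂ := fderiv ℂ f p (1, 0)

/-- `∂_z̄ f`, treating `z` and `z̄` as independent complex variables. -/
noncomputable def dzb (f : ℂ × ℂ → ℂ) (p : ℂ × ℂ) : ℂ := fderiv ℂ f p (0, 1)

/-- The Gauss-Codazzi equations at the point `p`. -/
def GaussCodazziAt (c : ℂ) (u H Q Qb : ℂ × ℂ → ℂ) (p : ℂ × ℂ) : Prop :=
  dzb (dz u) p + (1 / 2) * (H p ^ 2 - c ^ 2) * Complex.exp (u p)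
      - 2 * Q p * Qb p * Complex.exp (-u p) = 0 ∧
  dzb Q p - (1 / 2) * dz H p * Complex.exp (u p) = 0 ∧
  dz Qb p - (1 / 2) * dzb H p * Complex.exp (u p) = 0

/-!
Under `Q - Q̄ = c` the new mean curvature `Ĥ = 2Q - c` satisfies `Ĥ² - c² = 4QQ̄`, while
`Q̂Q̂̄ = (H² - c²)/4`; together with `u ↦ -u`, which swaps `eᵘ` and `e⁻ᵘ`, this exchanges the
two nonlinear terms of the Gauss equation and flips the sign of `u_{zz̄}`. The new Codazzi
equations are the old ones multiplied by `e⁻ᵘ` (with `Q_z = Q̄_z`).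
-/

theorem fderiv_const_mul_add {𝕜 E : Type*} [NontriviallyNormedField 𝕜] [NormedAddCommGroup E]
    [NormedSpace 𝕜 E] (f : E → 𝕜) (a b : 𝕜) :
    fderiv 𝕜 (fun y => a * f y + b) = a • fderiv 𝕜 f := by
  funext x
  rw [fderiv_add_const]
  exact congrFun (fderiv_const_smul_field (f := f) a) x

theorem dz_of_eq_const_mul_add {f g : ℂ × ℂ → ℂ} {a b : ℂ} (h : ∀ q, g q = a * f q + b) :
    dz g = fun p => a * dz f p := by
  funext p
  rw [dz, dz, funext h, fderiv_const_mul_add]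
  rfl

theorem dzb_of_eq_const_mul_add {f g : ℂ × ℂ → ℂ} {a b : ℂ} (h : ∀ q, g q = a * f q + b) :
    dzb g = fun p => a * dzb f p := by
  funext p
  rw [dzb, dzb, funext h, fderiv_const_mul_add]
  rfl

theorem GaussCodazziAt.dual {c : ℂ} {u H Q Qb : ℂ × ℂ → ℂ} {p : ℂ × ℂ}
    (hGC : GaussCodazziAt c u H Q Qb p) (hcon : ∀ q, Q q - Qb q = c) :
    GaussCodazziAt c (fun q => -u q) (fun q => 2 * Q q - c)
      (fun q => (H q + c) / 2) (fun q => (H q - c) / 2) p := by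
  obtain ⟨hGauss, hCodazzi, hCodazzi'⟩ := hGC
  have hexp : Complex.exp (u p) * Complex.exp (-u p) = 1 := by
    rw [← Complex.exp_add, add_neg_cancel, Complex.exp_zero]
  have hQ (q : ℂ × ℂ) : Q q = 1 * Qb q + c := by linear_combination hcon q
  have hdz_neg : dz (fun q => -u q) = fun q => -1 * dz u q :=
    dz_of_eq_const_mul_add (b := 0) fun q => by ring
  have hdzb_neg : dzb (fun q => -1 * dz u q) = fun q => -1 * dzb (dz u) q :=
    dzb_of_eq_const_mul_add (b := 0) fun q => by ring
  have hdzH : dz (fun q => 2 * Q q - c) = fun q => 2 * dz Qb q := by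
    rw [dz_of_eq_const_mul_add (a := 2) (b := -c) fun q => by ring, dz_of_eq_const_mul_add hQ]
    simp only [one_mul]
  have hdzbH : dzb (fun q => 2 * Q q - c) = fun q => 2 * dzb Q q :=
    dzb_of_eq_const_mul_add (a := 2) (b := -c) fun q => by ring
  have hdzbQhat : dzb (fun q => (H q + c) / 2) = fun q => 1 / 2 * dzb H q :=
    dzb_of_eq_const_mul_add (b := c / 2) fun q => by ring
  have hdzQbhat : dz (fun q => (H q - c) / 2) = fun q => 1 / 2 * dz H q :=
    dz_of_eq_const_mul_add (b := -c / 2) fun q => by ring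
  refine ⟨?_, ?_, ?_⟩
  · rw [hdz_neg, hdzb_neg, neg_neg]
    linear_combination -hGauss + 2 * Q p * Complex.exp (-u p) * hcon p
  · rw [hdzbQhat, hdzH]
    linear_combination -Complex.exp (-u p) * hCodazzi' - 1 / 2 * dzb H p * hexp
  · rw [hdzQbhat, hdzbH]
    linear_combination -Complex.exp (-u p) * hCodazzi - 1 / 2 * dz H p * hexp

theorem stmt_5_general (c : ℂ) (u H Q Qb : ℂ × ℂ → ℂ)
    (hGC : ∀ p, GaussCodazziAt c u H Q Qb p)
    (hcon : ∀ p, Q p - Qb p = c) :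
    (∀ p, GaussCodazziAt c (fun q => -u q) (fun q => 2 * Q q - c)
        (fun q => (H q + c) / 2) (fun q => (H q - c) / 2) p) ∧
    (∀ p : ℂ × ℂ, (H p + c) / 2 - (H p - c) / 2 = c) ∧
    (∀ p : ℂ × ℂ, -(-u p) = u p ∧ 2 * ((H p + c) / 2) - c = H p ∧
      ((2 * Q p - c) + c) / 2 = Q p ∧ ((2 * Q p - c) - c) / 2 = Qb p) :=
  ⟨fun p => (hGC p).dual hcon, fun p => by ring,
    fun p => ⟨by ring, by ring, by ring, by linear_combination hcon p⟩⟩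

/-- The involution `(u, H, Q, Q̄) ↦ (-u, 2Q - c, (H+c)/2, (H-c)/2)` maps solutions of the
Gauss-Codazzi system satisfying `Q - Q̄ = c` to solutions of the same system (with the
transformed fields again satisfying the constraint), and applying it twice is the identity. -/
theorem stmt_5 (c : ℂ) (u H Q Qb : ℂ × ℂ → ℂ)
    (hu : ContDiff ℂ ⊤ u) (hH : ContDiff ℂ ⊤ H) (hQ : ContDiff ℂ ⊤ Q) (hQb : ContDiff ℂ ⊤ Qb)
    (hGC : ∀ p, GaussCodazziAt c u H Q Qb p)
    (hcon : ∀ p, Q p - Qb p = c) :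
    (∀ p, GaussCodazziAt c (fun q => -u q) (fun q => 2 * Q q - c)
        (fun q => (H q + c) / 2) (fun q => (H q - c) / 2) p) ∧
    (∀ p : ℂ × ℂ, (H p + c) / 2 - (H p - c) / 2 = c) ∧
    (∀ p : ℂ × ℂ, -(-u p) = u p ∧ 2 * ((H p + c) / 2) - c = H p ∧
      ((2 * Q p - c) + c) / 2 = Q p ∧ ((2 * Q p - c) - c) / 2 = Qb p) :=
  stmt_5_general c u H Q Qb hGC hcon
end

section
/- The quantity K = (η v'/v + g)² − (h² − c²)v/η − 2(h+c)q − 2(h−c)r/η² − 4qr/(ηv) is a first integral of the reduced system (η v'/v)' − (h² − c²)v/(2η²) + 2qr/(η²v) = 0, −ηvh' − 2η²q' + (1+g)vh = 0, −η²vh' − 2ηr' + 2(1−g)r = 0 under the condition (1+g)c = 0; that is, dK/dη = 0 along solutions. -/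
/-!
Writing `w = η v'/v`, the three equations give `w'`, `q'` and `r'` explicitly in terms of
`v, h, q, r, v', h'`. Substituting them into `K'`, every term containing `v'` or `h'` cancels,
and so do the `qr` terms; what is left is `-(1+g) c ((h+c) v η + 2 r) / η³`, which vanishes
exactly because `(1+g) c = 0`.
-/

noncomputable def firstIntegral (g c : ℂ) (w v h q r : ℂ → ℂ) (t : ℂ) : ℂ :=
  (w t + g) ^ 2 - (h t ^ 2 - c ^ 2) * v t / t - 2 * (h t + c) * q t
    - 2 * (h t - c) * r t / t ^ 2 - 4 * q t * r t / (t * v t)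

theorem hasDerivAt_firstIntegral {g c η w' v' h' q' r' : ℂ} {w v h q r : ℂ → ℂ}
    (hη : η ≠ 0) (hvη : v η ≠ 0) (hw : HasDerivAt w w' η) (hv : HasDerivAt v v' η)
    (hh : HasDerivAt h h' η) (hq : HasDerivAt q q' η) (hr : HasDerivAt r r' η)
    (hwη : w η = η * v' / v η)
    (ode1 : w' - (h η ^ 2 - c ^ 2) * v η / (2 * η ^ 2) + 2 * q η * r η / (η ^ 2 * v η) = 0)
    (ode2 : -η * v η * h' - 2 * η ^ 2 * q' + (1 + g) * v η * h η = 0)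
    (ode3 : -η ^ 2 * v η * h' - 2 * η * r' + 2 * (1 - g) * r η = 0) :
    HasDerivAt (firstIntegral g c w v h q r)
      (-((1 + g) * c * ((h η + c) * v η * η + 2 * r η)) / η ^ 3) η := by
  have hw' : w' = (h η ^ 2 - c ^ 2) * v η / (2 * η ^ 2) - 2 * q η * r η / (η ^ 2 * v η) := by
    linear_combination ode1
  have hq' : q' = ((1 + g) * v η * h η - η * v η * h') / (2 * η ^ 2) := by
    field_simp
    linear_combination -ode2
  have hr' : r' = (2 * (1 - g) * r η - η ^ 2 * v η * h') / (2 * η) := by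
    field_simp
    linear_combination -ode3
  have hK := (((((hw.add_const g).pow 2).sub
    ((((hh.pow 2).sub_const (c ^ 2)).mul hv).div (hasDerivAt_id η) hη)).sub
    (((hh.add_const c).const_mul 2).mul hq)).sub
    ((((hh.sub_const c).const_mul 2).mul hr).div ((hasDerivAt_id η).pow 2) (pow_ne_zero 2 hη))).sub
    (((hq.const_mul 4).mul hr).div ((hasDerivAt_id η).mul hv) (mul_ne_zero hη hvη))
  refine hK.congr_deriv ?_
  simp only [id_eq, Pi.pow_apply, Pi.mul_apply, Nat.cast_ofNat, Nat.add_one_sub_one, pow_one]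
  rw [hwη, hw', hq', hr']
  field_simp
  ring

theorem stmt_8_general (g c : ℂ) (hgc : (1 + g) * c = 0) (v h q r : ℂ → ℂ) (s : Set ℂ)
    (hη0 : ∀ η ∈ s, η ≠ 0) (hv0 : ∀ η ∈ s, v η ≠ 0)
    (hvd : ∀ η ∈ s, DifferentiableAt ℂ v η)
    (hvd2 : ∀ η ∈ s, DifferentiableAt ℂ (deriv v) η)
    (hhd : ∀ η ∈ s, DifferentiableAt ℂ h η)
    (hqd : ∀ η ∈ s, DifferentiableAt ℂ q η)
    (hrd : ∀ η ∈ s, DifferentiableAt ℂ r η)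
    (ode1 : ∀ η ∈ s, deriv (fun t => t * deriv v t / v t) η
        - (h η ^ 2 - c ^ 2) * v η / (2 * η ^ 2) + 2 * q η * r η / (η ^ 2 * v η) = 0)
    (ode2 : ∀ η ∈ s, -η * v η * deriv h η - 2 * η ^ 2 * deriv q η + (1 + g) * v η * h η = 0)
    (ode3 : ∀ η ∈ s, -η ^ 2 * v η * deriv h η - 2 * η * deriv r η + 2 * (1 - g) * r η = 0) :
    ∀ η ∈ s, deriv (fun t =>
        (t * deriv v t / v t + g) ^ 2
        - (h t ^ 2 - c ^ 2) * v t / t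
        - 2 * (h t + c) * q t
        - 2 * (h t - c) * r t / t ^ 2
        - 4 * q t * r t / (t * v t)) η = 0 := by
  intro η hη
  have hw : DifferentiableAt ℂ (fun t => t * deriv v t / v t) η :=
    (differentiableAt_id.mul (hvd2 η hη)).div (hvd η hη) (hv0 η hη)
  have hK := hasDerivAt_firstIntegral (g := g) (c := c) (hη0 η hη) (hv0 η hη) hw.hasDerivAt
    (hvd η hη).hasDerivAt (hhd η hη).hasDerivAt (hqd η hη).hasDerivAt (hrd η hη).hasDerivAt
    rfl (ode1 η hη) (ode2 η hη) (ode3 η hη)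
  exact hK.deriv.trans (by rw [hgc]; ring)

/-- The quantity `K = (η v'/v + g)² - (h² - c²)v/η - 2(h+c)q - 2(h-c)r/η² - 4qr/(ηv)` is a
first integral of the reduced system obtained by symmetry reduction of the Gauss-Codazzi
equations, under the condition `(1+g)c = 0`: `dK/dη = 0` along solutions. -/
theorem stmt_8 (g c : ℂ) (hgc : (1 + g) * c = 0) (v h q r : ℂ → ℂ) (s : Set ℂ)
    (hs : IsOpen s) (hη0 : ∀ η ∈ s, η ≠ 0) (hv0 : ∀ η ∈ s, v η ≠ 0)
    (hvd : ∀ η ∈ s, DifferentiableAt ℂ v η)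
    (hvd2 : ∀ η ∈ s, DifferentiableAt ℂ (deriv v) η)
    (hhd : ∀ η ∈ s, DifferentiableAt ℂ h η)
    (hqd : ∀ η ∈ s, DifferentiableAt ℂ q η)
    (hrd : ∀ η ∈ s, DifferentiableAt ℂ r η)
    (ode1 : ∀ η ∈ s, deriv (fun t => t * deriv v t / v t) η
        - (h η ^ 2 - c ^ 2) * v η / (2 * η ^ 2) + 2 * q η * r η / (η ^ 2 * v η) = 0)
    (ode2 : ∀ η ∈ s, -η * v η * deriv h η - 2 * η ^ 2 * deriv q η + (1 + g) * v η * h η = 0)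
    (ode3 : ∀ η ∈ s, -η ^ 2 * v η * deriv h η - 2 * η * deriv r η + 2 * (1 - g) * r η = 0) :
    ∀ η ∈ s, deriv (fun t =>
        (t * deriv v t / v t + g) ^ 2
        - (h t ^ 2 - c ^ 2) * v t / t
        - 2 * (h t + c) * q t
        - 2 * (h t - c) * r t / t ^ 2
        - 4 * q t * r t / (t * v t)) η = 0 :=
  stmt_8_general g c hgc v h q r s hη0 hv0 hvd hvd2 hhd hqd hrd ode1 ode2 ode3
end

section
/- In the reduced isothermic case g = 1, c = 0, h = 0, q constant equal to c_q, the function defined by η v = (4c_q²/K) sinh²((√K/2)(ξ − ξ₀)) with η = e^ξ satisfies the first-integral equation (η v'/v + 1)² − K − 4q²/(ηv) = 0, for any constants ξ₀ and K ≠ 0 (with c_q ≠ 0). -/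
/-!
In the variable `ξ`, the quantity `η v'/v + 1` is the logarithmic derivative of `ξ ↦ η v`, and
logarithmic derivatives only depend on the germ, so it equals the logarithmic derivative
`√K coth((√K/2)(ξ - ξ₀))` of the profile `(4c_q²/K) sinh²((√K/2)(ξ - ξ₀))`. The first integral is
then the identity `K coth² = K + K / sinh²`, i.e. `cosh² - sinh² = 1`.
-/

open Complex Filter

theorem logDeriv_exp_mul_comp_exp {v : ℂ → ℂ} {ξ : ℂ} (hv : DifferentiableAt ℂ v (exp ξ))
    (hv0 : v (exp ξ) ≠ 0) :
    logDeriv (fun ξ => exp ξ * v (exp ξ)) ξ = exp ξ * deriv v (exp ξ) / v (exp ξ) + 1 := by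
  have hd : HasDerivAt (fun ξ => exp ξ * v (exp ξ))
      (exp ξ * v (exp ξ) + exp ξ * (deriv v (exp ξ) * exp ξ)) ξ :=
    (hasDerivAt_exp ξ).mul (hv.hasDerivAt.comp ξ (hasDerivAt_exp ξ))
  rw [logDeriv_apply, hd.deriv]
  field_simp [exp_ne_zero ξ]
  ring

theorem logDeriv_const_mul_sinh_sq {A k ξ₀ ξ : ℂ} (hA : A ≠ 0) :
    logDeriv (fun ξ => A * sinh (k * (ξ - ξ₀)) ^ 2) ξ
      = 2 * k * cosh (k * (ξ - ξ₀)) / sinh (k * (ξ - ξ₀)) := by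
  have hd : HasDerivAt (fun ξ => sinh (k * (ξ - ξ₀))) (cosh (k * (ξ - ξ₀)) * k) ξ := by
    simpa using (((hasDerivAt_id ξ).sub_const ξ₀).const_mul k).csinh
  rw [logDeriv_const_mul ξ A hA, logDeriv_fun_pow hd.differentiableAt, logDeriv_apply, hd.deriv]
  push_cast
  ring

theorem sinh_sq_first_integral {A k ξ₀ ξ : ℂ} (hu : A * sinh (k * (ξ - ξ₀)) ^ 2 ≠ 0) :
    logDeriv (fun ξ => A * sinh (k * (ξ - ξ₀)) ^ 2) ξ ^ 2 - (2 * k) ^ 2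
      - (2 * k) ^ 2 * A / (A * sinh (k * (ξ - ξ₀)) ^ 2) = 0 := by
  obtain ⟨hA, hS⟩ := mul_ne_zero_iff.mp hu
  replace hS := pow_ne_zero_iff two_ne_zero |>.mp hS
  rw [logDeriv_const_mul_sinh_sq hA]
  field_simp
  linear_combination (4 * k ^ 2) * cosh_sq_sub_sinh_sq (k * (ξ - ξ₀))

theorem stmt_9_general (cq K ξ0 sqrtK : ℂ) (hK : K ≠ 0) (hsq : sqrtK ^ 2 = K)
    (v : ℂ → ℂ) (s : Set ℂ) (hs : IsOpen s)
    (hvd : ∀ ξ ∈ s, DifferentiableAt ℂ v (Complex.exp ξ))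
    (hv0 : ∀ ξ ∈ s, v (Complex.exp ξ) ≠ 0)
    (hrel : ∀ ξ ∈ s, Complex.exp ξ * v (Complex.exp ξ)
        = (4 * cq ^ 2 / K) * Complex.sinh ((sqrtK / 2) * (ξ - ξ0)) ^ 2) :
    ∀ ξ ∈ s,
      (Complex.exp ξ * deriv v (Complex.exp ξ) / v (Complex.exp ξ) + 1) ^ 2 - K
        - 4 * cq ^ 2 / (Complex.exp ξ * v (Complex.exp ξ)) = 0 := by
  intro ξ hξ
  have hu : exp ξ * v (exp ξ) ≠ 0 := mul_ne_zero (exp_ne_zero ξ) (hv0 ξ hξ)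
  have hlog := (logDeriv_congr_nhds (eventuallyEq_of_mem (hs.mem_nhds hξ) hrel)).eq_of_nhds
  have hk : (2 * (sqrtK / 2)) ^ 2 = K := by rw [← hsq]; ring
  have hkA : K * (4 * cq ^ 2 / K) = 4 * cq ^ 2 := mul_div_cancel₀ _ hK
  have hfirst := sinh_sq_first_integral (k := sqrtK / 2) (hrel ξ hξ ▸ hu)
  rwa [hk, hkA, ← hlog, logDeriv_exp_mul_comp_exp (hvd ξ hξ) (hv0 ξ hξ), ← hrel ξ hξ] at hfirst

/-- In the reduced isothermic case `g = 1`, `c = 0`, `h = 0`, `q = c_q` constant, the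
function `v` defined by `η v = (4c_q²/K) sinh²((√K/2)(ξ - ξ₀))` with `η = e^ξ` satisfies
the first-integral equation `(η v'/v + 1)² - K - 4q²/(ηv) = 0`. -/
theorem stmt_9 (cq K ξ0 sqrtK : ℂ) (hK : K ≠ 0) (hcq : cq ≠ 0) (hsq : sqrtK ^ 2 = K)
    (v : ℂ → ℂ) (s : Set ℂ) (hs : IsOpen s)
    (hvd : ∀ ξ ∈ s, DifferentiableAt ℂ v (Complex.exp ξ))
    (hv0 : ∀ ξ ∈ s, v (Complex.exp ξ) ≠ 0)
    (hrel : ∀ ξ ∈ s, Complex.exp ξ * v (Complex.exp ξ)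
        = (4 * cq ^ 2 / K) * Complex.sinh ((sqrtK / 2) * (ξ - ξ0)) ^ 2) :
    ∀ ξ ∈ s,
      (Complex.exp ξ * deriv v (Complex.exp ξ) / v (Complex.exp ξ) + 1) ^ 2 - K
        - 4 * cq ^ 2 / (Complex.exp ξ * v (Complex.exp ξ)) = 0 :=
  stmt_9_general cq K ξ0 sqrtK hK hsq v s hs hvd hv0 hrel
end

section
/- In the reduced case g = −1 with h constant equal to h₀ and q = 0, the function v defined by η/v = ((h₀² − c²)/K) sinh²((√K/2)ξ − ξ₀) with η = e^ξ satisfies the first-integral equation (η v'/v − 1)² − K − (h₀² − c²)v/η = 0, for any constants ξ₀ and K with (h₀² − c²)K ≠ 0. -/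
/-!
Write `η = e^ξ`, `A = h₀² - c²` and `w = η v'/v - 1`. Differentiating `η/v` in `ξ` gives
`-(η/v) w`, while differentiating `(A/K) sinh² u` with `u = (√K/2) ξ - ξ₀` gives
`(A/K) √K sinh u cosh u`; comparing the two yields `w sinh u = -√K cosh u`. Squaring and using
`cosh² = 1 + sinh²` gives `w² = K + K / sinh² u = K + A v/η`.
-/

open Complex

theorem hasDerivAt_exp_div_comp_exp {v : ℂ → ℂ} {ξ : ℂ} (hv : DifferentiableAt ℂ v (exp ξ))
    (hv0 : v (exp ξ) ≠ 0) :
    HasDerivAt (fun x => exp x / v (exp x))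
      (exp ξ / v (exp ξ) * (1 - exp ξ * deriv v (exp ξ) / v (exp ξ))) ξ := by
  refine ((hasDerivAt_exp ξ).div (hv.hasDerivAt.comp ξ (hasDerivAt_exp ξ)) hv0).congr_deriv ?_
  simp only [Function.comp_apply]
  field_simp

theorem hasDerivAt_sinh_mul_sub_sq (b x₀ ξ : ℂ) :
    HasDerivAt (fun x => sinh (b * x - x₀) ^ 2)
      (b * (2 * sinh (b * ξ - x₀) * cosh (b * ξ - x₀))) ξ := by
  have hlin : HasDerivAt (fun x => b * x - x₀) b ξ := by
    simpa using ((hasDerivAt_id ξ).const_mul b).sub_const x₀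
  refine (hlin.csinh.pow 2).congr_deriv ?_
  push_cast
  ring

theorem sq_sub_sub_div_eq_zero_of_sinh_relation {A K k S C f w : ℂ} (hk : k ^ 2 = K)
    (hCS : C ^ 2 - S ^ 2 = 1) (hf : f = A / K * S ^ 2) (hf0 : f ≠ 0)
    (hderiv : -(f * w) = A / K * (k * S * C)) :
    w ^ 2 - K - A / f = 0 := by
  have hr : A / K ≠ 0 := left_ne_zero_of_mul (hf ▸ hf0)
  have hS : S ≠ 0 := pow_ne_zero_iff two_ne_zero |>.mp (right_ne_zero_of_mul (hf ▸ hf0))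
  obtain ⟨hA, hK⟩ := div_ne_zero_iff.mp hr
  have hSw : S * w = -(k * C) := by
    apply mul_left_cancel₀ (mul_ne_zero hr hS)
    rw [hf] at hderiv
    linear_combination -hderiv
  subst hf
  field_simp
  linear_combination (S * w - k * C) * hSw + C ^ 2 * hk + K * hCS

theorem stmt_10_general (h0 c K ξ0 sqrtK : ℂ) (hsq : sqrtK ^ 2 = K)
    (v : ℂ → ℂ) (s : Set ℂ) (hs : IsOpen s)
    (hvd : ∀ ξ ∈ s, DifferentiableAt ℂ v (Complex.exp ξ))
    (hv0 : ∀ ξ ∈ s, v (Complex.exp ξ) ≠ 0)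
    (hrel : ∀ ξ ∈ s, Complex.exp ξ / v (Complex.exp ξ)
        = ((h0 ^ 2 - c ^ 2) / K) * Complex.sinh ((sqrtK / 2) * ξ - ξ0) ^ 2) :
    ∀ ξ ∈ s,
      (Complex.exp ξ * deriv v (Complex.exp ξ) / v (Complex.exp ξ) - 1) ^ 2 - K
        - (h0 ^ 2 - c ^ 2) * v (Complex.exp ξ) / Complex.exp ξ = 0 := by
  intro ξ hξ
  have hrel_nhds : (fun x => exp x / v (exp x)) =ᶠ[nhds ξ]
      fun x => (h0 ^ 2 - c ^ 2) / K * sinh (sqrtK / 2 * x - ξ0) ^ 2 :=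
    Filter.eventually_of_mem (hs.mem_nhds hξ) hrel
  have hderiv := (hasDerivAt_exp_div_comp_exp (hvd ξ hξ) (hv0 ξ hξ)).unique
    (((hasDerivAt_sinh_mul_sub_sq (sqrtK / 2) ξ0 ξ).const_mul _).congr_of_eventuallyEq hrel_nhds)
  have key := sq_sub_sub_div_eq_zero_of_sinh_relation hsq (cosh_sq_sub_sinh_sq _) (hrel ξ hξ)
    (div_ne_zero (exp_ne_zero ξ) (hv0 ξ hξ))
    (w := exp ξ * deriv v (exp ξ) / v (exp ξ) - 1) (by linear_combination hderiv)
  rwa [div_div_eq_mul_div] at key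

/-- In the reduced case `g = -1` with `h = h₀` constant and `q = 0`, the function `v`
defined by `η/v = ((h₀² - c²)/K) sinh²((√K/2)ξ - ξ₀)` with `η = e^ξ` satisfies the
first-integral equation `(η v'/v - 1)² - K - (h₀² - c²)v/η = 0`. -/
theorem stmt_10 (h0 c K ξ0 sqrtK : ℂ) (hK : (h0 ^ 2 - c ^ 2) * K ≠ 0) (hsq : sqrtK ^ 2 = K)
    (v : ℂ → ℂ) (s : Set ℂ) (hs : IsOpen s)
    (hvd : ∀ ξ ∈ s, DifferentiableAt ℂ v (Complex.exp ξ))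
    (hv0 : ∀ ξ ∈ s, v (Complex.exp ξ) ≠ 0)
    (hrel : ∀ ξ ∈ s, Complex.exp ξ / v (Complex.exp ξ)
        = ((h0 ^ 2 - c ^ 2) / K) * Complex.sinh ((sqrtK / 2) * ξ - ξ0) ^ 2) :
    ∀ ξ ∈ s,
      (Complex.exp ξ * deriv v (Complex.exp ξ) / v (Complex.exp ξ) - 1) ^ 2 - K
        - (h0 ^ 2 - c ^ 2) * v (Complex.exp ξ) / Complex.exp ξ = 0 :=
  stmt_10_general h0 c K ξ0 sqrtK hsq v s hs hvd hv0 hrel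
end

section
/- Any differentiable function V(X) satisfying the first-order Riccati-type equation X(X−1)V'/(V(V−1)(V−X)) + θ₀/V + θ₁/(V−1) + (θ_X − 1)/(V−X) = 0 with θ_∞ = (1+g)/2, θ₀ = √K/2, θ₁ = −√K/2, θ_X = (1−g)/2 also satisfies the sixth Painlevé equation with parameters (θ_∞², θ₀², θ₁², θ_X²) = (((1+g)/2)², K/4, K/4, ((1−g)/2)²). -/
/-!
Write the Riccati equation as `X(X-1) V' = N(X, V)` with `N` quadratic in `V`. Differentiating
`V' = N(X, V) / (X(X-1))` once more expresses `V''` through `V` and `V'`; eliminating `V'` turns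
the sixth Painlevé equation into a rational identity in `X` and `V`, which holds as soon as
`θ₀ + θ₁ + θ_X + θ_∞ = 1`.
-/

/-- The right-hand side of the sixth Painlevé equation `V'' = painleveVI θinf θ₀ θ₁ θX X V V'`. -/
noncomputable def painleveVI (θinf θ₀ θ₁ θX X v w : ℂ) : ℂ :=
  1 / 2 * (1 / v + 1 / (v - 1) + 1 / (v - X)) * w ^ 2
    - (1 / X + 1 / (X - 1) + 1 / (v - X)) * w
    + v * (v - 1) * (v - X) / (2 * X ^ 2 * (X - 1) ^ 2)
      * (θinf ^ 2 - θ₀ ^ 2 * X / v ^ 2 + θ₁ ^ 2 * (X - 1) / (v - 1) ^ 2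
        + (1 - θX ^ 2) * X * (X - 1) / (v - X) ^ 2)

/-- The Riccati equation reads `X (X - 1) V' = riccatiNum θ₀ θ₁ θX X V`. -/
def riccatiNum (θ₀ θ₁ θX X v : ℂ) : ℂ :=
  -(θ₀ * (v - 1) * (v - X) + θ₁ * v * (v - X) + (θX - 1) * v * (v - 1))

section

variable {θ₀ θ₁ θX : ℂ}

theorem eq_riccatiNum_div_of_riccati {X v w : ℂ}
    (hv₀ : v ≠ 0) (hv₁ : v - 1 ≠ 0) (hvX : v - X ≠ 0) (hX₀ : X ≠ 0) (hX₁ : X - 1 ≠ 0)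
    (h : X * (X - 1) * w / (v * (v - 1) * (v - X)) + θ₀ / v + θ₁ / (v - 1)
      + (θX - 1) / (v - X) = 0) :
    w = riccatiNum θ₀ θ₁ θX X v / (X * (X - 1)) := by
  rw [eq_div_iff (mul_ne_zero hX₀ hX₁), riccatiNum]
  field_simp at h
  linear_combination h

theorem hasDerivAt_riccatiNum {V : ℂ → ℂ} {w X : ℂ} (hV : HasDerivAt V w X) :
    HasDerivAt (fun Y => riccatiNum θ₀ θ₁ θX Y (V Y))
      (-(θ₀ * (2 * V X - X - 1) + θ₁ * (2 * V X - X) + (θX - 1) * (2 * V X - 1)) * w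
        + θ₀ * (V X - 1) + θ₁ * V X) X := by
  have hVX := hV.fun_sub (hasDerivAt_id' X)
  have h := (((((hV.sub_const 1).const_mul θ₀).fun_mul hVX).fun_add
    ((hV.const_mul θ₁).fun_mul hVX)).fun_add
    ((hV.const_mul (θX - 1)).fun_mul (hV.sub_const 1))).fun_neg
  exact h.congr_deriv (by ring)

/-- The derivative of `X ↦ riccatiNum θ₀ θ₁ θX X (V X) / (X (X - 1))`, after eliminating `V'`
through the Riccati equation, is the Painlevé VI right-hand side. -/
theorem riccati_deriv_eq_painleveVI {θinf X v : ℂ} (hsum : θinf + θ₀ + θ₁ + θX = 1)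
    (hv₀ : v ≠ 0) (hv₁ : v - 1 ≠ 0) (hvX : v - X ≠ 0) (hX₀ : X ≠ 0) (hX₁ : X - 1 ≠ 0) :
    let w := riccatiNum θ₀ θ₁ θX X v / (X * (X - 1))
    ((-(θ₀ * (2 * v - X - 1) + θ₁ * (2 * v - X) + (θX - 1) * (2 * v - 1)) * w
        + θ₀ * (v - 1) + θ₁ * v) * (X * (X - 1))
      - riccatiNum θ₀ θ₁ θX X v * (1 * (X - 1) + X * 1)) / (X * (X - 1)) ^ 2
      = painleveVI θinf θ₀ θ₁ θX X v w := by
  intro w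
  obtain rfl : θinf = 1 - θ₀ - θ₁ - θX := by linear_combination hsum
  simp only [w, painleveVI, riccatiNum]
  field_simp
  ring

theorem deriv_deriv_eq_painleveVI_of_riccati {θinf : ℂ} (hsum : θinf + θ₀ + θ₁ + θX = 1)
    {V : ℂ → ℂ} {s : Set ℂ} (hs : IsOpen s) (hV : ∀ X ∈ s, DifferentiableAt ℂ V X)
    (hnd : ∀ X ∈ s, V X ≠ 0 ∧ V X - 1 ≠ 0 ∧ V X - X ≠ 0 ∧ X ≠ 0 ∧ X - 1 ≠ 0)
    (hric : ∀ X ∈ s, deriv V X = riccatiNum θ₀ θ₁ θX X (V X) / (X * (X - 1))) :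
    ∀ X ∈ s, deriv (deriv V) X = painleveVI θinf θ₀ θ₁ θX X (V X) (deriv V X) := by
  intro X hX
  obtain ⟨hv₀, hv₁, hvX, hX₀, hX₁⟩ := hnd X hX
  have hderiv : HasDerivAt (fun Y => riccatiNum θ₀ θ₁ θX Y (V Y) / (Y * (Y - 1))) _ X :=
    (hasDerivAt_riccatiNum (hV X hX).hasDerivAt).div
      ((hasDerivAt_id X).mul ((hasDerivAt_id X).sub_const 1)) (mul_ne_zero hX₀ hX₁)
  have hlocal : deriv V =ᶠ[nhds X] fun Y => riccatiNum θ₀ θ₁ θX Y (V Y) / (Y * (Y - 1)) :=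
    Filter.eventually_of_mem (hs.mem_nhds hX) hric
  rw [hlocal.deriv_eq, hderiv.deriv, hric X hX]
  exact riccati_deriv_eq_painleveVI hsum hv₀ hv₁ hvX hX₀ hX₁

end

/-- Any differentiable solution of the Riccati-type equation
`X(X-1)V'/(V(V-1)(V-X)) + θ₀/V + θ₁/(V-1) + (θ_X - 1)/(V-X) = 0` with
`θ_∞ = (1+g)/2`, `θ₀ = √K/2`, `θ₁ = -√K/2`, `θ_X = (1-g)/2` also satisfies the sixth
Painlevé equation with parameters `(θ_∞², θ₀², θ₁², θ_X²) = (((1+g)/2)², K/4, K/4, ((1-g)/2)²)`. -/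
theorem stmt_12 (g K sqrtK : ℂ) (hsq : sqrtK ^ 2 = K) (V : ℂ → ℂ) (s : Set ℂ) (hs : IsOpen s)
    (hV1 : ∀ X ∈ s, DifferentiableAt ℂ V X)
    (hnd : ∀ X ∈ s, V X ≠ 0 ∧ V X - 1 ≠ 0 ∧ V X - X ≠ 0 ∧ X ≠ 0 ∧ X - 1 ≠ 0)
    (hric : ∀ X ∈ s, X * (X - 1) * deriv V X / (V X * (V X - 1) * (V X - X))
        + (sqrtK / 2) / V X + (-sqrtK / 2) / (V X - 1)
        + ((1 - g) / 2 - 1) / (V X - X) = 0) :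
    ∀ X ∈ s, deriv (deriv V) X =
      (1 / 2) * (1 / V X + 1 / (V X - 1) + 1 / (V X - X)) * (deriv V X) ^ 2
      - (1 / X + 1 / (X - 1) + 1 / (V X - X)) * deriv V X
      + V X * (V X - 1) * (V X - X) / (2 * X ^ 2 * (X - 1) ^ 2)
        * (((1 + g) / 2) ^ 2 - (K / 4) * X / (V X) ^ 2 + (K / 4) * (X - 1) / (V X - 1) ^ 2
          + (1 - ((1 - g) / 2) ^ 2) * X * (X - 1) / (V X - X) ^ 2) := by
  have hric' : ∀ X ∈ s, deriv V X =
      riccatiNum (sqrtK / 2) (-sqrtK / 2) ((1 - g) / 2) X (V X) / (X * (X - 1)) := by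
    intro X hX
    obtain ⟨hv₀, hv₁, hvX, hX₀, hX₁⟩ := hnd X hX
    exact eq_riccatiNum_div_of_riccati hv₀ hv₁ hvX hX₀ hX₁ (hric X hX)
  have hsum : (1 + g) / 2 + sqrtK / 2 + -sqrtK / 2 + (1 - g) / 2 = 1 := by ring
  intro X hX
  rw [deriv_deriv_eq_painleveVI_of_riccati hsum hs hV1 hnd hric' X hX, painleveVI, ← hsq]
  ring
end
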